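/- Every J-ternary algebra is a special (1,1) Freudenthal–Kantor triple system; conversely, every special (1,1) Freudenthal–Kantor triple system is a J-ternary algebra. In particular, a J-ternary algebra satisfies K(K(u,v)x, y) = L(y,x)K(u,v) − K(u,v)L(x,y) for all u,v,x,y. -/
import Mathlib


/-- The operator `K(x,y)` (case `δ = 1`) of a triple system applied to `z`:
`K(x,y)z = xzy − yzx`. -/
def Kel {K U : Type*} [Field K] [AddCommGroup U] [Module K U]
    (m : U →ₗ[K] U →ₗ[K] U →ₗ[K] U) (x y z : U) : U :=
  m x z y - m y z x

theorem key_K_identity {K U : Type*} [Field K] [AddCommGroup U] [Module K U]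
    (m : U →ₗ[K] U →ₗ[K] U →ₗ[K] U)
    (hA : ∀ x y u v z : U,
        m x y (m u v z) = m (m x y u) v z + m u (m y x v) z + m u v (m x y z))
    (hB : ∀ x y z : U, m x y z - m z y x = m z x y - m x z y)
    (u v x y z : U) :
    Kel m (Kel m u v x) y z = m y x (Kel m u v z) - Kel m u v (m x y z) := by
  have emb2 : ∀ (a b p q r s : U), p - q = r - s → m a b p - m a b q = m a b r - m a b s := by
    intro a b p q r s h
    rw [← map_sub, ← map_sub, h]
  have emb0 : ∀ (a b p q r s : U), p - q = r - s → m p a b - m q a b = m r a b - m s a b := by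
    intro a b p q r s h
    have h2 : m (p - q) a b = m (r - s) a b := by rw [h]
    simpa only [map_sub, LinearMap.sub_apply] using h2
  simp only [Kel, map_sub, LinearMap.sub_apply]
  linear_combination (norm := module)
    hA u v x z y - hA u v y x z - hA u v y z x + hA v u x y z
    - hB (m u v y) x z + hB x (m u v y) z + hB (m v u x) y z - hB y (m v u x) z
    + hB x (m v u z) y + hB u (m x y z) v
    - emb2 y z _ _ _ _ (hB u x v) + emb0 z y _ _ _ _ (hB u x v)
    - emb2 y x _ _ _ _ (hB u z v) - emb2 u v _ _ _ _ (hB x z y)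

/-- J-ternary algebras are exactly the special (1,1)
Freudenthal–Kantor triple systems.  In particular a J-ternary algebra satisfies
`K(K(u,v)x, y) = L(y,x)K(u,v) − K(u,v)L(x,y)`. -/
theorem Jternary_iff_special_FKTS {K U : Type*} [Field K] [AddCommGroup U] [Module K U]
    (h2 : (2 : K) ≠ 0)
    (m : U →ₗ[K] U →ₗ[K] U →ₗ[K] U) :
    (((∀ x y u v z : U,
        m x y (m u v z) = m (m x y u) v z + m u (m y x v) z + m u v (m x y z)) ∧
      (∀ x y z : U, m x y z - m z y x = m z x y - m x z y))
    ↔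
    ((∀ u v x y z : U,
        m u v (m x y z) - m x y (m u v z) = m (m u v x) y z + m x (m v u y) z) ∧
     (∀ u v x y z : U,
        Kel m (Kel m u v x) y z = m y x (Kel m u v z) - Kel m u v (m x y z)) ∧
     (∀ x y z : U, Kel m x y z = m y x z - m x y z)))
    ∧
    (((∀ x y u v z : U,
        m x y (m u v z) = m (m x y u) v z + m u (m y x v) z + m u v (m x y z)) ∧
      (∀ x y z : U, m x y z - m z y x = m z x y - m x z y)) →
      ∀ u v x y z : U,
        Kel m (Kel m u v x) y z = m y x (Kel m u v z) - Kel m u v (m x y z)) := by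
  constructor
  · constructor
    · rintro ⟨hA, hB⟩
      refine ⟨fun u v x y z => ?_, key_K_identity m hA hB, fun x y z => ?_⟩
      · linear_combination (norm := module) hA u v x y z
      · simp only [Kel]
        exact hB x z y
    · rintro ⟨hA', _, hS⟩
      constructor
      · intro x y u v z
        linear_combination (norm := module) hA' x y u v z
      · intro x y z
        have h := hS x z y
        simp only [Kel] at h
        exact h
  · rintro ⟨hA, hB⟩
    exact key_K_identity m hA hB
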